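/- arXiv:1201.0435 — 2 statements merged into one kernel-verified Lean document; each statement's English description precedes it below -/
import Mathlib

section
/- Let N=(V,E,s,t) be an acyclic unit-capacity point-to-point network with C_N(s,t) ≥ 2. Then every edge lying on some directed s-t path is contained in some 2-CF of N. -/
/-- A point-to-point network: a finite directed multigraph with edge set
`edges`, endpoint maps `tail`/`head`, source `s` and sink `t`; every edge has
unit capacity. -/
structure Network (V : Type) (ε : Type) where
  edges : Finset ε
  tail : ε → V
  head : ε → V
  s : V
  t : V

namespace Network

variable {V ε : Type} [DecidableEq ε]

/-- `p` is a nonempty directed walk from `u` to `v` using edges of `N`. -/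
def IsWalk (N : Network V ε) (u v : V) (p : List ε) : Prop :=
  p ≠ [] ∧ (∀ e ∈ p, e ∈ N.edges) ∧
  (∀ i, ∀ h : i + 1 < p.length,
    N.head (p.get ⟨i, Nat.lt_of_succ_lt h⟩) = N.tail (p.get ⟨i + 1, h⟩)) ∧
  (∀ h : 0 < p.length, N.tail (p.get ⟨0, h⟩) = u) ∧
  (∀ h : 0 < p.length, N.head (p.get ⟨p.length - 1, Nat.sub_lt h Nat.one_pos⟩) = v)

/-- An `s`-`t` path: an edge-simple walk from the source to the sink. -/
def IsPath (N : Network V ε) (p : List ε) : Prop :=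
  N.IsWalk N.s N.t p ∧ p.Nodup

/-- `v` is reachable from `u` by a directed walk (or `u = v`). -/
def Reach (N : Network V ε) (u v : V) : Prop :=
  u = v ∨ ∃ p, N.IsWalk u v p

/-- Reachability within the subgraph induced by the vertex set `S`. -/
def ReachIn (N : Network V ε) (S : Set V) (u v : V) : Prop :=
  u = v ∨ ∃ p, N.IsWalk u v p ∧ ∀ e ∈ p, N.tail e ∈ S ∧ N.head e ∈ S

/-- An edge-simple directed cycle. -/
def IsCycle (N : Network V ε) (p : List ε) : Prop :=
  ∃ u, N.IsWalk u u p ∧ p.Nodup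

def Acyclic (N : Network V ε) : Prop := ∀ p, ¬ N.IsCycle p

/-- A collection of pairwise edge-disjoint `s`-`t` paths (an integral flow in a
unit-capacity network). -/
def IsFlowList (N : Network V ε) (fs : List (List ε)) : Prop :=
  (∀ p ∈ fs, N.IsPath p) ∧ fs.Pairwise fun p q => ∀ e ∈ p, e ∉ q

def HasFlow (N : Network V ε) (n : ℕ) : Prop :=
  ∃ fs, N.IsFlowList fs ∧ fs.length = n

/-- The maximum-flow value `C_N(s,t)`: the maximum number of pairwise
edge-disjoint directed `s`-`t` paths. -/
noncomputable def maxFlow (N : Network V ε) : ℕ :=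
  sSup {n | N.HasFlow n}

/-- Delete the edges of `F` from the network. -/
def del (N : Network V ε) (F : Finset ε) : Network V ε :=
  { N with edges := N.edges \ F }

/-- `F` is a `k`-th order capacity factor of `N`:
`C_{N\F} ≤ C_N − k`, and `C_{N\F'} > C_N − k` for every proper `F' ⊊ F`. -/
def IsKCF (N : Network V ε) (k : ℕ) (F : Finset ε) : Prop :=
  F.Nonempty ∧ F ⊆ N.edges ∧ (N.del F).maxFlow + k ≤ N.maxFlow ∧
    ∀ F' ⊂ F, N.maxFlow < (N.del F').maxFlow + k

/-- `F` is a capacity factor of `N`: deleting `F` decreases the maximum flow,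
while deleting any proper subset does not. -/
def IsCF (N : Network V ε) (F : Finset ε) : Prop :=
  F.Nonempty ∧ F ⊆ N.edges ∧ (N.del F).maxFlow < N.maxFlow ∧
    ∀ F' ⊂ F, (N.del F').maxFlow = N.maxFlow

/-- The set of edges used by a flow given as a list of paths. -/
def usedEdges (fs : List (List ε)) : Finset ε := fs.flatten.toFinset

/-- Residual network w.r.t. a set of used (unit-capacity) edges: used edges
are reversed, unused edges keep their direction. -/
def residual (N : Network V ε) (used : Finset ε) : Network V ε :=
  { edges := N.edges,
    tail := fun e => if e ∈ used then N.head e else N.tail e,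
    head := fun e => if e ∈ used then N.tail e else N.head e,
    s := N.s, t := N.t }

/-- The same network with sink replaced by `v`. -/
def withSink (N : Network V ε) (v : V) : Network V ε := { N with t := v }

end Network

open Network

/-!
Rerouting the given `s`-`t` path through `e` along a maximum flow until it meets at most two of
its paths, and replacing those, gives a flow `fs` of value `C_N - 1` that uses `e`. Let `T` be
the set of vertices reachable from the head of `e`. By acyclicity it contains neither the tail
of `e` nor `s`, and since nothing leaves `T`, every `s`-`t` path enters `T` exactly once. After
deleting `e` and all edges unused by `fs`, only `C_N - 2` edges entering `T` remain, so the flow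
drops by 2, while deleting the unused edges alone keeps `fs`. A minimal subset of the first
deleted set that still drops the flow by 2 is a 2-CF, and it has to contain `e`.
-/

namespace Network

variable {V ε : Type} {N : Network V ε} {u v w x : V} {p q : List ε} {e f : ε}

-- Unlike `IsWalk`, the empty list is allowed, so that walks split cleanly at any edge.
def Chain (N : Network V ε) : V → V → List ε → Prop
  | u, v, [] => u = v
  | u, v, f :: p => f ∈ N.edges ∧ N.tail f = u ∧ N.Chain (N.head f) v p

@[simp] theorem chain_nil : N.Chain u v [] ↔ u = v := Iff.rfl

@[simp] theorem chain_cons :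
    N.Chain u v (f :: p) ↔ f ∈ N.edges ∧ N.tail f = u ∧ N.Chain (N.head f) v p := Iff.rfl

theorem chain_append : N.Chain u w (p ++ q) ↔ ∃ v, N.Chain u v p ∧ N.Chain v w q := by
  induction p generalizing u with
  | nil => simp
  | cons f p ih => simp [ih, and_assoc, exists_and_left]

theorem chain_singleton : N.Chain u v [f] ↔ f ∈ N.edges ∧ N.tail f = u ∧ N.head f = v := by
  simp

theorem Chain.mem_edges (h : N.Chain u v p) (hf : f ∈ p) : f ∈ N.edges := by
  induction p generalizing u with
  | nil => simp at hf
  | cons g p ih =>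
    rcases List.mem_cons.1 hf with rfl | hf
    · exact h.1
    · exact ih h.2.2 hf

theorem Chain.split_of_mem (h : N.Chain u v p) (hf : f ∈ p) :
    ∃ A B, p = A ++ f :: B ∧
      N.Chain u (N.tail f) A ∧ f ∈ N.edges ∧ N.Chain (N.head f) v B := by
  obtain ⟨A, B, rfl⟩ := List.append_of_mem hf
  obtain ⟨w, hA, hf, rfl, hB⟩ := chain_append.1 h
  exact ⟨A, B, rfl, hA, hf, hB⟩

theorem isWalk_cons :
    N.IsWalk u v (f :: p) ↔ f ∈ N.edges ∧ N.tail f = u ∧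
      (p = [] ∧ N.head f = v ∨ N.IsWalk (N.head f) v p) := by
  cases p with
  | nil => simp [IsWalk, and_comm]
  | cons g p =>
    have hstep : (∀ i (h : i + 1 < (f :: g :: p).length),
          N.head (f :: g :: p)[i] = N.tail (f :: g :: p)[i + 1]) ↔
        N.head f = N.tail g ∧ ∀ i (h : i + 1 < (g :: p).length),
          N.head (g :: p)[i] = N.tail (g :: p)[i + 1] :=
      ⟨fun h => ⟨h 0 (by simp), fun i hi => h (i + 1) (by simpa using hi)⟩,
        fun ⟨h₀, h⟩ i hi => by
          cases i with
          | zero => exact h₀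
          | succ i => exact h i (by simpa using hi)⟩
    simp only [IsWalk, List.get_eq_getElem]
    rw [hstep]
    simp only [List.mem_cons, forall_eq_or_imp, ne_eq,
      reduceCtorEq, not_false_eq_true, List.length_cons, List.getElem_cons_zero, true_and,
      Nat.add_sub_cancel, List.getElem_cons_succ, eq_comm (a := N.head f), Nat.zero_lt_succ,
      forall_const, false_and, false_or]
    tauto

theorem isWalk_iff_chain : N.IsWalk u v p ↔ p ≠ [] ∧ N.Chain u v p := by
  induction p generalizing u with
  | nil => simp [IsWalk]
  | cons f p ih =>
    rw [isWalk_cons, ih]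
    cases p <;> simp [eq_comm]

theorem IsPath.chain (h : N.IsPath p) : N.Chain N.s N.t p := (isWalk_iff_chain.1 h.1).2

-- A repeated edge `f` closes the cycle running from `f` to its next occurrence.
theorem Acyclic.nodup_of_chain (hA : N.Acyclic) (h : N.Chain u v p) : p.Nodup := by
  induction p generalizing u with
  | nil => exact List.nodup_nil
  | cons f p ih =>
    refine List.nodup_cons.2 ⟨fun hf => ?_, ih h.2.2⟩
    obtain ⟨A, B, rfl, hAc, -, -⟩ := h.2.2.split_of_mem hf
    obtain ⟨hAnd, -, hfA⟩ := List.nodup_append.1 (ih h.2.2)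
    have hcyc : N.IsWalk (N.tail f) (N.tail f) (f :: A) :=
      isWalk_iff_chain.2 ⟨List.cons_ne_nil _ _, h.1, rfl, hAc⟩
    exact hA (f :: A)
      ⟨N.tail f, hcyc, List.nodup_cons.2 ⟨fun hfA' => hfA f hfA' f (by simp) rfl, hAnd⟩⟩

theorem Acyclic.not_chain_head_tail (hA : N.Acyclic) (he : e ∈ N.edges) :
    ¬ N.Chain (N.head e) (N.tail e) p := fun h =>
  have hc : N.Chain (N.tail e) (N.tail e) (e :: p) := ⟨he, rfl, h⟩
  hA (e :: p)
    ⟨N.tail e, isWalk_iff_chain.2 ⟨List.cons_ne_nil _ _, hc⟩, hA.nodup_of_chain hc⟩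

section Flows

variable {fs gs : List (List ε)}

theorem IsFlowList.notMem_of_ne (h : N.IsFlowList fs) (hp : p ∈ fs) (hq : q ∈ fs)
    (hpq : p ≠ q) (hf : f ∈ p) : f ∉ q := by
  have : Std.Symm fun p q : List ε => ∀ e ∈ p, e ∉ q :=
    ⟨fun _ _ h e heq hep => h e hep heq⟩
  exact h.2.forall hp hq hpq f hf

theorem IsFlowList.nodup (h : N.IsFlowList fs) : fs.Nodup := by
  refine h.2.imp_of_mem fun {p q} hp _ hpq hpq' => ?_
  subst hpq'
  obtain ⟨f, hf⟩ := List.exists_mem_of_ne_nil p (h.1 p hp).1.1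
  exact hpq f hf hf

theorem IsFlowList.sublist (h : N.IsFlowList fs) (hgs : gs.Sublist fs) : N.IsFlowList gs :=
  ⟨fun p hp => h.1 p (hgs.subset hp), h.2.sublist hgs⟩

theorem IsFlowList.length_le_card (h : N.IsFlowList fs) : fs.length ≤ N.edges.card := by
  classical
  have hnd : fs.flatten.Nodup :=
    List.nodup_flatten.2 ⟨fun p hp => (h.1 p hp).2, h.2.imp fun hpq f hp hq => hpq f hp hq⟩
  calc fs.length ≤ (fs.map List.length).sum :=
        (List.length_map _ ▸ List.length_le_sum_of_one_le _ (by
          simp only [List.mem_map]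
          rintro _ ⟨p, hp, rfl⟩
          exact List.length_pos_iff.2 (h.1 p hp).1.1))
    _ = fs.flatten.toFinset.card := by rw [List.toFinset_card_of_nodup hnd, List.length_flatten]
    _ ≤ N.edges.card := Finset.card_le_card fun f hf => by
        obtain ⟨p, hp, hfp⟩ := List.mem_flatten.1 (List.mem_toFinset.1 hf)
        exact (h.1 p hp).chain.mem_edges hfp

theorem bddAbove_hasFlow : BddAbove {n | N.HasFlow n} := by
  refine ⟨N.edges.card, ?_⟩
  rintro _ ⟨fs, hfs, rfl⟩
  exact hfs.length_le_card

theorem IsFlowList.length_le_maxFlow (h : N.IsFlowList fs) : fs.length ≤ N.maxFlow :=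
  le_csSup bddAbove_hasFlow ⟨fs, h, rfl⟩

theorem exists_isFlowList_length_maxFlow : ∃ fs, N.IsFlowList fs ∧ fs.length = N.maxFlow :=
  Nat.sSup_mem (s := {n | N.HasFlow n}) ⟨0, [], ⟨by simp, by simp⟩, rfl⟩ bddAbove_hasFlow

theorem maxFlow_le {m : ℕ} (h : ∀ fs, N.IsFlowList fs → fs.length ≤ m) :
    N.maxFlow ≤ m := by
  obtain ⟨fs, hfs, hlen⟩ := exists_isFlowList_length_maxFlow (N := N)
  exact hlen ▸ h fs hfs

variable [DecidableEq ε] {F F' : Finset ε}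

theorem mem_usedEdges : f ∈ usedEdges fs ↔ ∃ p ∈ fs, f ∈ p := by
  simp [usedEdges]

theorem isWalk_del_iff :
    (N.del F).IsWalk u v p ↔ N.IsWalk u v p ∧ ∀ f ∈ p, f ∉ F := by
  simp only [IsWalk, del, Finset.mem_sdiff, imp_and, forall_and]
  tauto

theorem isFlowList_del_iff :
    (N.del F).IsFlowList fs ↔ N.IsFlowList fs ∧ Disjoint F (usedEdges fs) := by
  simp only [IsFlowList, IsPath, isWalk_del_iff, Finset.disjoint_right, mem_usedEdges]
  constructor
  · rintro ⟨h, hpw⟩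
    exact ⟨⟨fun p hp => ⟨(h p hp).1.1, (h p hp).2⟩, hpw⟩,
      fun f ⟨p, hp, hf⟩ => (h p hp).1.2 f hf⟩
  · rintro ⟨⟨h, hpw⟩, hF⟩
    exact ⟨fun p hp => ⟨⟨(h p hp).1, fun f hf => hF ⟨p, hp, hf⟩⟩, (h p hp).2⟩, hpw⟩

theorem maxFlow_del_anti (hF : F' ⊆ F) : (N.del F).maxFlow ≤ (N.del F').maxFlow := by
  obtain ⟨fs, hfs, hlen⟩ := exists_isFlowList_length_maxFlow (N := N.del F)
  obtain ⟨hfs, hdisj⟩ := isFlowList_del_iff.1 hfs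
  exact hlen ▸ (isFlowList_del_iff.2 ⟨hfs, hdisj.mono_left hF⟩).length_le_maxFlow

end Flows

section Rerouting

variable {qs : List (List ε)} {P : List ε}

-- Follow `p` until it first meets a path `q` of `qs`, then follow `q`.
theorem exists_chain_to_sink (hqs : N.IsFlowList qs) (h : N.Chain x N.t p) :
    ∃ q R, N.Chain x N.t R ∧ (∀ f ∈ p.head?, f ∈ R) ∧
      ∀ r ∈ qs, r ≠ q → ∀ g ∈ R, g ∉ r := by
  induction p generalizing x with
  | nil => exact ⟨[], [], h, by simp, by simp⟩
  | cons f p ih =>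
    obtain ⟨hf, rfl, hp⟩ := h
    by_cases hU : ∃ r ∈ qs, f ∈ r
    · obtain ⟨r, hr, hfr⟩ := hU
      obtain ⟨A, B, rfl, -, -, hB⟩ := (hqs.1 _ hr).chain.split_of_mem hfr
      exact ⟨_, f :: B, ⟨hf, rfl, hB⟩, by simp, fun r' hr' hne g hg =>
        hqs.notMem_of_ne hr hr' hne.symm (List.mem_append_right A hg)⟩
    · push Not at hU
      obtain ⟨q, R, hR, -, hav⟩ := ih hp
      refine ⟨q, f :: R, ⟨hf, rfl, hR⟩, by simp, fun r hr hne g hg => ?_⟩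
      rcases List.mem_cons.1 hg with rfl | hg
      · exact hU r hr
      · exact hav r hr hne g hg

-- Follow the path `q` of `qs` through the last edge of `p` lying on `qs`, then the rest of `p`.
theorem exists_chain_from_source (hqs : N.IsFlowList qs) (h : N.Chain N.s x p) :
    ∃ q L, N.Chain N.s x L ∧ ∀ r ∈ qs, r ≠ q → ∀ g ∈ L, g ∉ r := by
  induction p using List.reverseRecOn generalizing x with
  | nil => exact ⟨[], [], h, by simp⟩
  | append_singleton p f ih =>
    obtain ⟨y, hp, hy⟩ := chain_append.1 h
    obtain ⟨hf, rfl, rfl⟩ := chain_singleton.1 hy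
    by_cases hU : ∃ r ∈ qs, f ∈ r
    · obtain ⟨r, hr, hfr⟩ := hU
      obtain ⟨A, B, rfl, hA, -, -⟩ := (hqs.1 _ hr).chain.split_of_mem hfr
      exact ⟨_, A ++ [f], chain_append.2 ⟨_, hA, by simp [hf]⟩, fun r' hr' hne g hg =>
        hqs.notMem_of_ne hr hr' hne.symm
          (((List.nil_sublist B).cons_cons f).append_left A |>.subset hg)⟩
    · push Not at hU
      obtain ⟨q, L, hL, hav⟩ := ih hp
      refine ⟨q, L ++ [f], chain_append.2 ⟨_, hL, by simp [hf]⟩, fun r hr hne g hg => ?_⟩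
      rcases List.mem_append.1 hg with hg | hg
      · exact hav r hr hne g hg
      · exact List.mem_singleton.1 hg ▸ hU r hr

-- Glued at `e`, the two reroutings of `P` form an `s`-`t` path meeting only the paths `q'` and
-- `q` of `qs`, so it can replace them.
theorem exists_isFlowList_mem_usedEdges [DecidableEq ε] (hA : N.Acyclic)
    (hqs : N.IsFlowList qs) (hP : N.IsPath P) (heP : e ∈ P) {n : ℕ} (hn : 1 ≤ n)
    (hnq : n < qs.length) : ∃ fs, N.IsFlowList fs ∧ fs.length = n ∧ e ∈ usedEdges fs := by
  obtain ⟨A, B, -, hAc, he, hB⟩ := hP.chain.split_of_mem heP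
  obtain ⟨q', L, hL, hL'⟩ := exists_chain_from_source hqs hAc
  obtain ⟨q, R, hR, heR, hR'⟩ := exists_chain_to_sink hqs (p := e :: B) ⟨he, rfl, hB⟩
  replace heR : e ∈ R := heR e rfl
  have hW : N.IsPath (L ++ R) := by
    have hc := chain_append.2 ⟨_, hL, hR⟩
    exact ⟨isWalk_iff_chain.2 ⟨by simp [List.ne_nil_of_mem heR], hc⟩, hA.nodup_of_chain hc⟩
  set rest := (qs.erase q).erase q'
  have hrest : ∀ r ∈ rest, r ≠ q' ∧ r ≠ q ∧ r ∈ qs := fun r hr => by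
    rwa [(hqs.nodup.erase q).mem_erase_iff, hqs.nodup.mem_erase_iff] at hr
  have hlen : qs.length ≤ rest.length + 2 := by
    simp only [rest, List.length_erase]
    split_ifs <;> omega
  have hsub : (rest.take (n - 1)).Sublist qs :=
    (List.take_sublist _ _).trans (List.erase_sublist.trans List.erase_sublist)
  refine ⟨(L ++ R) :: rest.take (n - 1), ⟨?_, ?_⟩, ?_,
    mem_usedEdges.2 ⟨_, List.mem_cons_self, List.mem_append_right L heR⟩⟩
  · intro p hp
    rcases List.mem_cons.1 hp with rfl | hp
    · exact hW
    · exact hqs.1 p (hsub.subset hp)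
  · refine List.pairwise_cons.2 ⟨fun r hr g hg => ?_, hqs.2.sublist hsub⟩
    obtain ⟨hrq', hrq, hr⟩ := hrest r (List.mem_of_mem_take hr)
    rcases List.mem_append.1 hg with hg | hg
    · exact hL' r hr hrq' g hg
    · exact hR' r hr hrq g hg
  · simp only [List.length_cons, List.length_take]
    omega

end Rerouting

section Cuts

variable (T : Set V)

def IsOutClosed (N : Network V ε) (T : Set V) : Prop :=
  ∀ f ∈ N.edges, N.tail f ∈ T → N.head f ∈ T

noncomputable def entering (N : Network V ε) (T : Set V) (S : Finset ε) : Finset ε := by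
  classical exact S.filter fun f => N.tail f ∉ T ∧ N.head f ∈ T

theorem mem_entering {S : Finset ε} :
    f ∈ N.entering T S ↔ f ∈ S ∧ N.tail f ∉ T ∧ N.head f ∈ T := by
  simp [entering]

variable {T}

theorem Chain.tail_mem (hT : N.IsOutClosed T) (h : N.Chain u v p) (hu : u ∈ T) (hf : f ∈ p) :
    N.tail f ∈ T := by
  induction p generalizing u with
  | nil => simp at hf
  | cons g p ih =>
    obtain ⟨hg, rfl, hp⟩ := h
    rcases List.mem_cons.1 hf with rfl | hf
    · exact hu
    · exact ih hp (hT g hg hu) hf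

variable [DecidableEq ε]

theorem Chain.card_entering (hT : N.IsOutClosed T) (h : N.Chain u v p) (hu : u ∉ T)
    (hv : v ∈ T) : (N.entering T p.toFinset).card = 1 := by
  induction p generalizing u with
  | nil => exact absurd (h ▸ hv) hu
  | cons f p ih =>
    obtain ⟨hf, rfl, hp⟩ := h
    by_cases hfT : N.head f ∈ T
    · rw [Finset.card_eq_one]
      refine ⟨f, Finset.ext fun g => ?_⟩
      simp only [mem_entering, List.mem_toFinset, List.mem_cons, Finset.mem_singleton]
      constructor
      · rintro ⟨rfl | hg, hgT, -⟩
        · rfl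
        · exact absurd (hp.tail_mem hT hfT hg) hgT
      · rintro rfl
        exact ⟨Or.inl rfl, hu, hfT⟩
    · rw [← ih hp hfT]
      congr 1
      ext g
      simp only [mem_entering, List.mem_toFinset, List.mem_cons]
      constructor
      · rintro ⟨rfl | hg, hgT⟩
        · exact absurd hgT.2 hfT
        · exact ⟨hg, hgT⟩
      · rintro ⟨hg, hgT⟩
        exact ⟨Or.inr hg, hgT⟩

theorem card_entering_usedEdges (hT : N.IsOutClosed T) (hs : N.s ∉ T) (ht : N.t ∈ T)
    {fs : List (List ε)} (hfs : N.IsFlowList fs) :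
    (N.entering T (usedEdges fs)).card = fs.length := by
  induction fs with
  | nil => simp [usedEdges, entering]
  | cons p fs ih =>
    have hfs' : N.IsFlowList fs := hfs.sublist (List.sublist_cons_self p fs)
    have hdisj : Disjoint (N.entering T p.toFinset) (N.entering T (usedEdges fs)) :=
      Finset.disjoint_left.2 fun f hfp hffs => by
        obtain ⟨q, hq, hfq⟩ := mem_usedEdges.1 ((mem_entering T).1 hffs).1
        exact (List.pairwise_cons.1 hfs.2).1 q hq f
          (List.mem_toFinset.1 ((mem_entering T).1 hfp).1) hfq
    have hunion : N.entering T (usedEdges (p :: fs)) =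
        N.entering T p.toFinset ∪ N.entering T (usedEdges fs) := by
      ext f
      simp only [mem_entering, Finset.mem_union, mem_usedEdges, List.mem_cons, List.mem_toFinset]
      grind
    rw [hunion, Finset.card_union_of_disjoint hdisj,
      (hfs.1 p List.mem_cons_self).chain.card_entering hT hs ht, ih hfs', List.length_cons,
      add_comm]

-- A flow surviving the deletion can only enter `T` through the edges of `fs` other than `e`.
theorem maxFlow_del_lt (hT : N.IsOutClosed T) (hs : N.s ∉ T) (ht : N.t ∈ T)
    {fs : List (List ε)} (hfs : N.IsFlowList fs) (he : e ∈ N.entering T (usedEdges fs)) :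
    (N.del (insert e (N.edges \ usedEdges fs))).maxFlow < fs.length := by
  have hpos : 0 < fs.length :=
    card_entering_usedEdges hT hs ht hfs ▸ Finset.card_pos.2 ⟨e, he⟩
  suffices (N.del (insert e (N.edges \ usedEdges fs))).maxFlow ≤ fs.length - 1 by omega
  refine maxFlow_le fun gs hgs => ?_
  obtain ⟨hgs, hdisj⟩ := isFlowList_del_iff.1 hgs
  calc gs.length = (N.entering T (usedEdges gs)).card :=
        (card_entering_usedEdges hT hs ht hgs).symm
    _ ≤ ((N.entering T (usedEdges fs)).erase e).card := Finset.card_le_card fun g hg => by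
        obtain ⟨hg, hgT⟩ := (mem_entering T).1 hg
        obtain ⟨p, hp, hgp⟩ := mem_usedEdges.1 hg
        have hgX : g ∉ insert e (N.edges \ usedEdges fs) := Finset.disjoint_right.1 hdisj hg
        simp only [Finset.mem_insert, Finset.mem_sdiff, not_or, not_and, not_not] at hgX
        exact Finset.mem_erase.2
          ⟨hgX.1, (mem_entering T).2 ⟨hgX.2 ((hgs.1 p hp).chain.mem_edges hgp), hgT⟩⟩
    _ = fs.length - 1 := by
        rw [Finset.card_erase_of_mem he, card_entering_usedEdges hT hs ht hfs]

theorem maxFlow_del_lt_of_mem_path (hA : N.Acyclic) {P : List ε} (hP : N.IsPath P)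
    (heP : e ∈ P) {fs : List (List ε)} (hfs : N.IsFlowList fs) (he : e ∈ usedEdges fs) :
    (N.del (insert e (N.edges \ usedEdges fs))).maxFlow < fs.length := by
  obtain ⟨A, B, -, hAc, heE, hB⟩ := hP.chain.split_of_mem heP
  set T := {x | ∃ c, N.Chain (N.head e) x c}
  have hT : N.IsOutClosed T := fun f hf ⟨c, hc⟩ =>
    ⟨c ++ [f], chain_append.2 ⟨_, hc, chain_singleton.2 ⟨hf, rfl, rfl⟩⟩⟩
  have htail : N.tail e ∉ T := fun ⟨c, hc⟩ => hA.not_chain_head_tail heE hc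
  exact maxFlow_del_lt hT (fun ⟨c, hc⟩ => htail ⟨c ++ A, chain_append.2 ⟨_, hc, hAc⟩⟩)
    ⟨B, hB⟩ hfs ((mem_entering T).2 ⟨he, htail, [], rfl⟩)

end Cuts

theorem exists_isKCF_mem [DecidableEq ε] {X : Finset ε} {k : ℕ} (hX : X ⊆ N.edges)
    (hdel : (N.del X).maxFlow + k ≤ N.maxFlow)
    (herase : N.maxFlow < (N.del (X.erase e)).maxFlow + k) :
    ∃ F ⊆ X, N.IsKCF k F ∧ e ∈ F := by
  obtain ⟨F, hFX, hF⟩ :=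
    exists_minimal_le_of_wellFoundedLT (fun F => (N.del F).maxFlow + k ≤ N.maxFlow) X hdel
  have heF : e ∈ F := by
    by_contra heF
    have := maxFlow_del_anti (N := N) (Finset.subset_erase.2 ⟨hFX, heF⟩)
    have := hF.prop
    omega
  refine ⟨F, hFX, ⟨⟨e, heF⟩, hFX.trans hX, hF.prop, fun F' hF' => ?_⟩, heF⟩
  exact not_le.1 (hF.not_prop_of_lt hF')

end Network

/-- In an acyclic network with max flow at least 2, every edge on some `s`-`t`
path is contained in some 2-CF. -/
theorem mem_twoCF_of_on_path {V ε : Type} [DecidableEq ε]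
    (N : Network V ε) (hA : N.Acyclic) (hflow : 2 ≤ N.maxFlow) :
    ∀ e, (∃ p, N.IsPath p ∧ e ∈ p) → ∃ F, N.IsKCF 2 F ∧ e ∈ F := by
  rintro e ⟨P, hP, heP⟩
  obtain ⟨qs, hqs, hlen⟩ := exists_isFlowList_length_maxFlow (N := N)
  obtain ⟨fs, hfs, hfslen, hefs⟩ :=
    exists_isFlowList_mem_usedEdges hA hqs hP heP (n := N.maxFlow - 1) (by omega) (by omega)
  have hcut := maxFlow_del_lt_of_mem_path hA hP heP hfs hefs
  have hkeep : fs.length ≤ (N.del (N.edges \ usedEdges fs)).maxFlow :=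
    (isFlowList_del_iff.2 ⟨hfs, Finset.sdiff_disjoint⟩).length_le_maxFlow
  have heE : e ∈ N.edges := hP.chain.mem_edges heP
  obtain ⟨F, -, hF, heF⟩ := exists_isKCF_mem (X := insert e (N.edges \ usedEdges fs)) (k := 2)
    (Finset.insert_subset heE Finset.sdiff_subset) (by omega)
    (by rw [Finset.erase_insert (by simp [hefs])]; omega)
  exact ⟨F, hF, heF⟩
end

section
/- Let N=(V,E,s,t) be a unit-capacity point-to-point network with D-set D (the union of all capacity factors) and H-set H = E \ D. Then deleting all edges of H does not change the maximum flow: C_{N\H}(s,t) = C_N(s,t). -/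
open Network

/-!
If deleting `H` lowered the maximum flow, a minimal subset of `H` whose deletion still lowers it
would be a capacity factor; but no edge of `H` lies in a capacity factor.
-/

namespace Network

variable {V ε : Type} {N : Network V ε}

lemma hasFlow_zero (N : Network V ε) : N.HasFlow 0 :=
  ⟨[], ⟨fun _ hp => absurd hp List.not_mem_nil, List.Pairwise.nil⟩, rfl⟩

variable [DecidableEq ε]

lemma IsWalk.of_del {F : Finset ε} {u v : V} {p : List ε} (h : (N.del F).IsWalk u v p) :
    N.IsWalk u v p :=
  let ⟨hne, hmem, hchain, htail, hhead⟩ := h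
  ⟨hne, fun e he => (Finset.mem_sdiff.mp (hmem e he)).1, hchain, htail, hhead⟩

lemma IsFlowList.of_del {F : Finset ε} {fs : List (List ε)} (h : (N.del F).IsFlowList fs) :
    N.IsFlowList fs :=
  ⟨fun p hp => ⟨(h.1 p hp).1.of_del, (h.1 p hp).2⟩, h.2⟩

lemma IsFlowList.length_le_card_edges {fs : List (List ε)} (h : N.IsFlowList fs) :
    fs.length ≤ N.edges.card := by
  have hnodup : fs.flatten.Nodup :=
    List.nodup_flatten.mpr ⟨fun p hp => (h.1 p hp).2, h.2⟩
  have hsub : fs.flatten.toFinset ⊆ N.edges := by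
    intro e he
    obtain ⟨p, hp, hep⟩ := List.mem_flatten.mp (List.mem_toFinset.mp he)
    exact (h.1 p hp).1.2.1 e hep
  calc fs.length = (fs.map List.length).length := (List.length_map _).symm
    _ ≤ (fs.map List.length).sum := List.length_le_sum_of_one_le _ <| by
        simp only [List.mem_map]
        rintro _ ⟨p, hp, rfl⟩
        exact List.length_pos_iff.mpr (h.1 p hp).1.1
    _ = fs.flatten.length := List.length_flatten.symm
    _ = fs.flatten.toFinset.card := (List.toFinset_card_of_nodup hnodup).symm
    _ ≤ N.edges.card := Finset.card_le_card hsub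

lemma bddAbove_hasFlow_s16 (N : Network V ε) : BddAbove {n | N.HasFlow n} :=
  ⟨N.edges.card, fun _ ⟨_, hfs, hlen⟩ => hlen ▸ hfs.length_le_card_edges⟩

lemma maxFlow_del_le (N : Network V ε) (F : Finset ε) : (N.del F).maxFlow ≤ N.maxFlow :=
  csSup_le_csSup N.bddAbove_hasFlow_s16 ⟨0, hasFlow_zero _⟩
    fun _ ⟨fs, hfs, hlen⟩ => ⟨fs, hfs.of_del, hlen⟩

@[simp]
lemma del_empty (N : Network V ε) : N.del ∅ = N := by
  simp [del]

lemma exists_isCF_subset_of_maxFlow_del_lt {F : Finset ε} (hF : F ⊆ N.edges)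
    (hlt : (N.del F).maxFlow < N.maxFlow) : ∃ F' ⊆ F, N.IsCF F' := by
  induction F using Finset.strongInduction with
  | H F ih =>
    by_cases hmin : ∀ F' ⊂ F, (N.del F').maxFlow = N.maxFlow
    · refine ⟨F, subset_rfl, ?_, hF, hlt, hmin⟩
      rw [Finset.nonempty_iff_ne_empty]
      rintro rfl
      simp at hlt
    · simp only [not_forall] at hmin
      obtain ⟨F', hF'F, hne⟩ := hmin
      obtain ⟨G, hGF', hG⟩ := ih F' hF'F (hF'F.subset.trans hF)
        (lt_of_le_of_ne (N.maxFlow_del_le F') hne)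
      exact ⟨G, hGF'.trans hF'F.subset, hG⟩

end Network

/-- Deleting the `H`-set (the edges in no capacity factor) does not change the
maximum flow. -/
theorem del_Hset_maxFlow {V ε : Type} [DecidableEq ε]
    (N : Network V ε) (H : Finset ε)
    (hH : ∀ e, e ∈ H ↔ e ∈ N.edges ∧ ∀ F, N.IsCF F → e ∉ F) :
    (N.del H).maxFlow = N.maxFlow := by
  refine le_antisymm (N.maxFlow_del_le H) (not_lt.mp fun hlt => ?_)
  obtain ⟨F, hFH, hF⟩ :=
    exists_isCF_subset_of_maxFlow_del_lt (fun e he => ((hH e).mp he).1) hlt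
  obtain ⟨e, he⟩ := hF.1
  exact ((hH e).mp (hFH he)).2 F hF he
end
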